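/- Let q be an odd prime power with q ≡ 1 (mod 4). For vectors u, v ∈ F_q² define D(u,v) = u₀v₁ − u₁v₀, and for a triple define D(u,v,w) = D(u,v)·D(v,w)·D(w,u). Then for all nonzero vectors u, v, w ∈ F_q², every matrix A ∈ SL(2,F_q), all nonzero scalars λ, μ, ν ∈ F_q, and every triple (u', v', w') obtained by permuting the triple (λ·(A·u), μ·(A·v), ν·(A·w)), the element D(u',v',w') is a square in F_q if and only if D(u,v,w) is a square in F_q. -/
import Mathlib


/-- `D(u, v) = u₀v₁ − u₁v₀` for vectors `u, v` in the plane. -/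
def Dpair {K : Type*} [Field K] (u v : Fin 2 → K) : K := u 0 * v 1 - u 1 * v 0

/-- `D(u, v, w) = D(u,v) ⬝ D(v,w) ⬝ D(w,u)` for a triple of vectors in the plane. -/
def Dtriple {K : Type*} [Field K] (u v w : Fin 2 → K) : K :=
  Dpair u v * Dpair v w * Dpair w u

private lemma aux_sq_mul {K : Type*} [Field K] (c x : K) (h : IsSquare x) :
    IsSquare (c ^ 2 * x) := by
  obtain ⟨y, hy⟩ := h
  exact ⟨c * y, by rw [hy]; ring⟩

private lemma sq_mul_isSquare_iff {K : Type*} [Field K] {c : K} (hc : c ≠ 0) (x : K) :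
    IsSquare (c ^ 2 * x) ↔ IsSquare x := by
  constructor
  · intro h
    have := aux_sq_mul c⁻¹ _ h
    rwa [show c⁻¹ ^ 2 * (c ^ 2 * x) = x by field_simp] at this
  · exact aux_sq_mul c x

private lemma neg_isSquare_iff {K : Type*} [Field K] (hneg : IsSquare (-1 : K)) (x : K) :
    IsSquare (-x) ↔ IsSquare x := by
  constructor
  · intro h
    have := hneg.mul h
    rwa [show (-1 : K) * -x = x by ring] at this
  · intro h
    have := hneg.mul h
    rwa [show (-1 : K) * x = -x by ring] at this

private lemma dpair_smul {K : Type*} [Field K] (a b : K) (u v : Fin 2 → K) :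
    Dpair (a • u) (b • v) = a * b * Dpair u v := by
  simp [Dpair]; ring

private lemma dtriple_perm {K : Type*} [Field K] (a b c : Fin 2 → K) (i j k : Fin 3)
    (hij : i ≠ j) (hik : i ≠ k) (hjk : j ≠ k) :
    Dtriple (![a, b, c] i) (![a, b, c] j) (![a, b, c] k) = Dtriple a b c ∨
    Dtriple (![a, b, c] i) (![a, b, c] j) (![a, b, c] k) = -Dtriple a b c := by
  fin_cases i <;> fin_cases j <;> fin_cases k <;>
    first
      | exact absurd rfl hij
      | exact absurd rfl hik
      | exact absurd rfl hjk
      | (simp only [Fin.isValue, Fin.mk_zero, Fin.mk_one,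
          show ((⟨2, by omega⟩ : Fin 3) = 2) from rfl,
          Matrix.cons_val_zero, Matrix.cons_val_one, Matrix.head_cons,
          Matrix.cons_val_two, Matrix.tail_cons]
         first
           | (left; simp only [Dtriple, Dpair]; (try ring1); done)
           | (right; simp only [Dtriple, Dpair]; (try ring1); done))

private lemma dpair_mulVec {K : Type*} [Field K] (A : Matrix (Fin 2) (Fin 2) K)
    (u v : Fin 2 → K) : Dpair (A.mulVec u) (A.mulVec v) = A.det * Dpair u v := by
  simp [Dpair, Matrix.mulVec, dotProduct, Fin.sum_univ_two, Matrix.det_fin_two]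
  ring

/-- Let `q` be an odd prime power with `q ≡ 1 (mod 4)`. For nonzero vectors
`u, v, w` of `F_q²`, any `A ∈ SL(2, F_q)`, nonzero scalars `λ, μ, ν` and any triple
`(u', v', w')` obtained by permuting `(λ⬝Au, μ⬝Av, ν⬝Aw)`, the quantity `D(u', v', w')` is a
square in `F_q` if and only if `D(u, v, w)` is. -/
theorem dtriple_isSquare_invariant (p m : ℕ) [Fact p.Prime] (hp : Odd p) (hm : 1 ≤ m)
    (hq : p ^ m % 4 = 1)
    (u v w : Fin 2 → GaloisField p m) (hu : u ≠ 0) (hv : v ≠ 0) (hw : w ≠ 0)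
    (A : Matrix.SpecialLinearGroup (Fin 2) (GaloisField p m))
    (lam mu nu : GaloisField p m) (hlam : lam ≠ 0) (hmu : mu ≠ 0) (hnu : nu ≠ 0)
    (σ : Equiv.Perm (Fin 3)) (u' v' w' : Fin 2 → GaloisField p m)
    (hperm : ![u', v', w'] =
      (![lam • (A : Matrix (Fin 2) (Fin 2) (GaloisField p m)).mulVec u,
         mu • (A : Matrix (Fin 2) (Fin 2) (GaloisField p m)).mulVec v,
         nu • (A : Matrix (Fin 2) (Fin 2) (GaloisField p m)).mulVec w] ∘ σ)) :
    IsSquare (Dtriple u' v' w') ↔ IsSquare (Dtriple u v w) := by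
  haveI : Fintype (GaloisField p m) := Fintype.ofFinite _
  have hcard : Fintype.card (GaloisField p m) = p ^ m := by
    rw [← Nat.card_eq_fintype_card]; exact GaloisField.card p m (Nat.one_le_iff_ne_zero.mp hm)
  have hneg : IsSquare (-1 : GaloisField p m) := by
    rw [FiniteField.isSquare_neg_one_iff, hcard, hq]
    decide
  set a := lam • (A : Matrix (Fin 2) (Fin 2) (GaloisField p m)).mulVec u with ha
  set b := mu • (A : Matrix (Fin 2) (Fin 2) (GaloisField p m)).mulVec v with hb
  set c := nu • (A : Matrix (Fin 2) (Fin 2) (GaloisField p m)).mulVec w with hc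
  have hu' := congrFun hperm 0
  have hv' := congrFun hperm 1
  have hw' := congrFun hperm 2
  simp only [Matrix.cons_val_zero, Matrix.cons_val_one, Matrix.head_cons,
    Matrix.cons_val_two, Matrix.tail_cons, Function.comp_apply] at hu' hv' hw'
  have hdet : (A : Matrix (Fin 2) (Fin 2) (GaloisField p m)).det = 1 := A.2
  have habc : Dtriple a b c = (lam * mu * nu) ^ 2 * Dtriple u v w := by
    rw [ha, hb, hc]
    simp only [Dtriple, dpair_smul, dpair_mulVec, hdet]
    ring
  have key : IsSquare (Dtriple a b c) ↔ IsSquare (Dtriple u v w) := by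
    rw [habc]
    exact sq_mul_isSquare_iff (mul_ne_zero (mul_ne_zero hlam hmu) hnu) _
  rw [hu', hv', hw']
  have hperm' := dtriple_perm a b c (σ 0) (σ 1) (σ 2)
    (fun h => by simpa using σ.injective h)
    (fun h => by simpa using σ.injective h)
    (fun h => by simpa using σ.injective h)
  rcases hperm' with h | h
  · rw [h]; exact key
  · rw [h, neg_isSquare_iff hneg]; exact key
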